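/- For semi-Markovian causal models, the Markov and Faithfulness assumptions do not entail NoE-minimality: there exist a finite vertex set V, an independence model I over V, and an SMCM G over V satisfying the Markov and Faithfulness assumptions with I such that some SMCM over V with strictly fewer edges than G also satisfies the Markov assumption with I. Concretely, take V = {V1, V2}, I = ∅ (the empty independence model), and G the SMCM with both edges V1→V2 and V1↔V2; then G satisfies Markov and Faithfulness with I, while the SMCM with the single edge V1→V2 has fewer edges and satisfies Markov with I. -/

import Mathlib

/-! A single edge between `x` and `y` is a path with no inner vertex, hence m-connecting
given every set. On two vertices both graphs are therefore complete and entail no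
m-separation at all, so each is Markov with the empty independence model, to which any
graph is trivially faithful; the graph with the single edge `V1 → V2` has one edge fewer. -/

/-- The kind of an edge as traversed from left to right along a path:
forward directed (`a → b`), backward directed (`a ← b`), or bidirected (`a ↔ b`). -/
inductive EKind : Type
  | fwd | bwd | bi
deriving DecidableEq, Inhabited

/-- The edge kind has an arrowhead at its left endpoint. -/
def EKind.arrowLeft : EKind → Prop
  | .fwd => False
  | .bwd => True
  | .bi  => True

/-- The edge kind has an arrowhead at its right endpoint. -/
def EKind.arrowRight : EKind → Prop
  | .fwd => True
  | .bwd => False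
  | .bi  => True

/-- A mixed graph over a vertex type `V`: a set of directed edges and a set of
bidirected edges between distinct vertices. -/
structure MGraph (V : Type) where
  dir : V → V → Prop
  bidir : V → V → Prop
  dir_irrefl : ∀ x, ¬ dir x x
  bidir_irrefl : ∀ x, ¬ bidir x x
  bidir_symm : ∀ x y, bidir x y → bidir y x

namespace MGraph

variable {V : Type}

/-- There is an edge of the given kind (read left-to-right) between `a` and `b`. -/
def edgeKind (G : MGraph V) : EKind → V → V → Prop
  | .fwd, a, b => G.dir a b
  | .bwd, a, b => G.dir b a
  | .bi,  a, b => G.bidir a b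

/-- `x` is an ancestor of `y`: `x = y` or there is a directed path from `x` to `y`. -/
def Ancestor (G : MGraph V) : V → V → Prop := Relation.ReflTransGen G.dir

/-- The graph has no directed cycle. -/
def Acyclic (G : MGraph V) : Prop := ∀ x y, G.Ancestor x y → G.Ancestor y x → x = y

/-- `x` and `y` are adjacent: some edge joins them. -/
def Adj (G : MGraph V) (x y : V) : Prop := G.dir x y ∨ G.dir y x ∨ G.bidir x y

/-- A path between `x` and `y`: a sequence of distinct vertices starting at `x` and
ending at `y`, together with, for each consecutive pair, an edge of the graph between
them (recorded by its kind). -/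
structure Path (G : MGraph V) (x y : V) : Type where
  verts : List V
  kinds : List EKind
  len_eq : verts.length = kinds.length + 1
  nodup : verts.Nodup
  head_eq : verts.head? = some x
  last_eq : verts.getLast? = some y
  valid : ∀ i, i < kinds.length →
    G.edgeKind (kinds.getD i .fwd) (verts.getD i x) (verts.getD (i + 1) x)

namespace Path

variable {G : MGraph V} {x y : V}

/-- The `i`-th vertex on the path. -/
def vert (p : G.Path x y) (i : ℕ) : V := p.verts.getD i x

/-- The kind of the `i`-th edge on the path. -/
def kind (p : G.Path x y) (i : ℕ) : EKind := p.kinds.getD i .fwd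

/-- The (non-endpoint) vertex at position `i` is a collider on the path: both incident
edges have an arrowhead at it. -/
def ColliderAt (p : G.Path x y) (i : ℕ) : Prop :=
  1 ≤ i ∧ i + 1 < p.verts.length ∧
    (p.kind (i - 1)).arrowRight ∧ (p.kind i).arrowLeft

/-- The path is m-connecting given `Z`: every non-collider on it is not in `Z` and
every collider on it has a descendant in `Z`. -/
def MConn (p : G.Path x y) (Z : Set V) : Prop :=
  ∀ i, 1 ≤ i → i + 1 < p.verts.length →
    (p.ColliderAt i → ∃ d ∈ Z, G.Ancestor (p.vert i) d) ∧
    (¬ p.ColliderAt i → p.vert i ∉ Z)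

/-- The path is an inducing path: every non-endpoint vertex is a collider on the path
and an ancestor of one of the endpoints. -/
def Inducing (p : G.Path x y) : Prop :=
  ∀ i, 1 ≤ i → i + 1 < p.verts.length →
    p.ColliderAt i ∧ (G.Ancestor (p.vert i) x ∨ G.Ancestor (p.vert i) y)

end Path

/-- Distinct vertices `x, y ∉ Z` are m-separated by `Z`: no path between them is
m-connecting given `Z`. -/
def MSep (G : MGraph V) (x y : V) (Z : Set V) : Prop :=
  x ≠ y ∧ x ∉ Z ∧ y ∉ Z ∧
    (∀ p : G.Path x y, ¬ p.MConn Z) ∧ (∀ p : G.Path y x, ¬ p.MConn Z)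

/-- Sets `A` and `B` are m-separated by `C`: every `a ∈ A` and `b ∈ B` are. -/
def MSepSets (G : MGraph V) (A B C : Set V) : Prop :=
  ∀ a ∈ A, ∀ b ∈ B, G.MSep a b C

/-- `x` and `y` are virtually adjacent: there is an inducing path between them. -/
def VAdj (G : MGraph V) (x y : V) : Prop :=
  x ≠ y ∧ ((∃ p : G.Path x y, p.Inducing) ∨ (∃ p : G.Path y x, p.Inducing))

/-- The graph `M` corresponding to an SMCM `S`: distinct `x, y` are adjacent in `M`
iff there is an inducing path between them in `S`, with the edge oriented `x → y` if
`x` is an ancestor of `y` in `S`, `y → x` if `y` is an ancestor of `x` in `S`, and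
`x ↔ y` otherwise. -/
def mag (S : MGraph V) : MGraph V where
  dir x y := S.VAdj x y ∧ S.Ancestor x y
  bidir x y := S.VAdj x y ∧ ¬ S.Ancestor x y ∧ ¬ S.Ancestor y x
  dir_irrefl := fun x h => h.1.1 rfl
  bidir_irrefl := fun x h => h.1.1 rfl
  bidir_symm := fun _ _ h => ⟨⟨h.1.1.symm, h.1.2.symm⟩, h.2.2, h.2.1⟩

/-- An ancestral graph: at most one edge between any two vertices, and whenever `x`
is an ancestor of `y`, no edge between `x` and `y` has an arrowhead at `x`. -/
def Ancestral (G : MGraph V) : Prop :=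
  (∀ x y, G.Ancestor x y → x ≠ y → ¬ G.dir y x ∧ ¬ G.bidir x y) ∧
  (∀ x y, ¬ (G.dir x y ∧ G.bidir x y))

/-- A maximal ancestral graph: an ancestral graph in which every pair of non-adjacent
vertices is m-separated by some subset of the remaining vertices. -/
def IsMAG (G : MGraph V) : Prop :=
  G.Ancestral ∧ ∀ x y : V, x ≠ y → ¬ G.Adj x y →
    ∃ Z : Set V, x ∉ Z ∧ y ∉ Z ∧ G.MSep x y Z

/-- The number of edges of a mixed graph (directed edges plus bidirected edges, the
latter counted as unordered pairs). -/
noncomputable def numEdges (G : MGraph V) : ℕ :=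
  {p : V × V | G.dir p.1 p.2}.ncard +
    {e : Sym2 V | ∃ a b, e = s(a, b) ∧ G.bidir a b}.ncard

/-- The number of virtual adjacencies (unordered pairs of virtually adjacent
vertices). -/
noncomputable def numVAdj (G : MGraph V) : ℕ :=
  {e : Sym2 V | ∃ a b, e = s(a, b) ∧ G.VAdj a b}.ncard

/-- The number of m-separation statements entailed by the graph: triples `(X, Y, Z)`
of pairwise disjoint subsets with `X, Y` nonempty such that `X` and `Y` are
m-separated by `Z`. -/
noncomputable def numSep (G : MGraph V) : ℕ :=
  {t : Set V × Set V × Set V | t.1.Nonempty ∧ t.2.1.Nonempty ∧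
    Disjoint t.1 t.2.1 ∧ Disjoint t.1 t.2.2 ∧ Disjoint t.2.1 t.2.2 ∧
    G.MSepSets t.1 t.2.1 t.2.2}.ncard

/-- An unshielded triple `⟨a, z, b⟩`: `a, z` adjacent, `z, b` adjacent, `a, b` not
adjacent. -/
def UnshieldedTriple (G : MGraph V) (a z b : V) : Prop :=
  a ≠ z ∧ z ≠ b ∧ a ≠ b ∧ G.Adj a z ∧ G.Adj z b ∧ ¬ G.Adj a b

/-- Some edge between `a` and `z` has an arrowhead at `z`. -/
def ArrowAt (G : MGraph V) (a z : V) : Prop := G.dir a z ∨ G.bidir a z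

/-- An unshielded collider: an unshielded triple whose two edges both have arrowheads
at the middle vertex. -/
def UnshieldedCollider (G : MGraph V) (a z b : V) : Prop :=
  G.UnshieldedTriple a z b ∧ G.ArrowAt a z ∧ G.ArrowAt b z

/-- A discriminating path for `⟨X, Z, Y⟩`: a path `(V₀, V₁, ..., Vₘ = X, Z, Y)` with
`m ≥ 1` such that `V₀` and `Y` are not adjacent and every `Vᵢ` with `1 ≤ i ≤ m` is a
collider on the path and a parent of `Y`. -/
def IsDiscriminating (G : MGraph V) {v₀ w : V} (p : G.Path v₀ w) (X Z Y : V) : Prop :=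
  4 ≤ p.verts.length ∧ w = Y ∧
  p.vert (p.verts.length - 3) = X ∧
  p.vert (p.verts.length - 2) = Z ∧
  v₀ ≠ Y ∧ ¬ G.Adj v₀ Y ∧
  ∀ i, 1 ≤ i → i ≤ p.verts.length - 3 → p.ColliderAt i ∧ G.dir (p.vert i) Y

end MGraph

/-- An independence model over `V`: a set of triples `(X, Y, Z)` of pairwise disjoint
subsets of `V` with `X, Y` nonempty. -/
def IsIndepModel {V : Type} (I : Set (Set V × Set V × Set V)) : Prop :=
  ∀ t ∈ I, t.1.Nonempty ∧ t.2.1.Nonempty ∧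
    Disjoint t.1 t.2.1 ∧ Disjoint t.1 t.2.2 ∧ Disjoint t.2.1 t.2.2

/-- `G` satisfies the Markov assumption with `I`: every triple `(X, Y, Z)` such that
`X` and `Y` are m-separated by `Z` in `G` belongs to `I`. -/
def Markov {V : Type} (G : MGraph V) (I : Set (Set V × Set V × Set V)) : Prop :=
  ∀ X Y Z : Set V, X.Nonempty → Y.Nonempty →
    Disjoint X Y → Disjoint X Z → Disjoint Y Z →
    G.MSepSets X Y Z → (X, Y, Z) ∈ I

/-- `G` satisfies the Faithfulness assumption with `I`: every triple in `I` is
m-separated in `G`. -/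
def Faithful {V : Type} (G : MGraph V) (I : Set (Set V × Set V × Set V)) : Prop :=
  ∀ X Y Z : Set V, (X, Y, Z) ∈ I → G.MSepSets X Y Z

/-- `G` satisfies the Adjacency-faithfulness assumption with `I`: for adjacent
distinct `x, y` and any `Z ⊆ V ∖ {x, y}`, the triple `({x}, {y}, Z)` is not in `I`. -/
def AdjFaithful {V : Type} (G : MGraph V) (I : Set (Set V × Set V × Set V)) : Prop :=
  ∀ x y : V, x ≠ y → G.Adj x y →
    ∀ Z : Set V, x ∉ Z → y ∉ Z → ({x}, {y}, Z) ∉ I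

/-- `G` satisfies the V-adjacency-faithfulness assumption with `I`: for virtually
adjacent `x, y` and any `Z ⊆ V ∖ {x, y}`, the triple `({x}, {y}, Z)` is not in `I`. -/
def VAdjFaithful {V : Type} (G : MGraph V) (I : Set (Set V × Set V × Set V)) : Prop :=
  ∀ x y : V, G.VAdj x y →
    ∀ Z : Set V, x ∉ Z → y ∉ Z → ({x}, {y}, Z) ∉ I

/-- A MAG `G` is NoE-minimal with `I`: no MAG over `V` with strictly fewer edges
satisfies the Markov assumption with `I`. -/
def NoEMinimalMAG {V : Type} (G : MGraph V) (I : Set (Set V × Set V × Set V)) : Prop :=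
  ¬ ∃ G' : MGraph V, G'.IsMAG ∧ G'.numEdges < G.numEdges ∧ Markov G' I

/-- An SMCM `G` is NoE-minimal with `I`: no SMCM over `V` with strictly fewer edges
satisfies the Markov assumption with `I`. -/
def NoEMinimalSMCM {V : Type} (G : MGraph V) (I : Set (Set V × Set V × Set V)) : Prop :=
  ¬ ∃ G' : MGraph V, G'.Acyclic ∧ G'.numEdges < G.numEdges ∧ Markov G' I

/-- An SMCM `G` is V-adjacency-minimal with `I`: no SMCM over `V` with strictly fewer
virtual adjacencies satisfies the Markov assumption with `I`. -/
def VAdjMinimal {V : Type} (G : MGraph V) (I : Set (Set V × Set V × Set V)) : Prop :=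
  ¬ ∃ G' : MGraph V, G'.Acyclic ∧ G'.numVAdj < G.numVAdj ∧ Markov G' I

/-- A MAG `G` is NoI-minimal with `I`: no MAG over `V` entailing strictly more
m-separation statements satisfies the Markov assumption with `I`. -/
def NoIMinimalMAG {V : Type} (G : MGraph V) (I : Set (Set V × Set V × Set V)) : Prop :=
  ¬ ∃ G' : MGraph V, G'.IsMAG ∧ G.numSep < G'.numSep ∧ Markov G' I

/-- An SMCM `G` is NoI-minimal with `I`: no SMCM over `V` entailing strictly more
m-separation statements satisfies the Markov assumption with `I`. -/
def NoIMinimalSMCM {V : Type} (G : MGraph V) (I : Set (Set V × Set V × Set V)) : Prop :=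
  ¬ ∃ G' : MGraph V, G'.Acyclic ∧ G.numSep < G'.numSep ∧ Markov G' I


/-- The SMCM over `V = {V1, V2}` (as `Fin 2`) with both edges `V1 → V2` and
`V1 ↔ V2`. -/
def exGraph2 : MGraph (Fin 2) where
  dir a b := a = 0 ∧ b = 1
  bidir a b := (a = 0 ∧ b = 1) ∨ (a = 1 ∧ b = 0)
  dir_irrefl := by decide
  bidir_irrefl := by decide
  bidir_symm := by decide

/-- The SMCM over `V = {V1, V2}` (as `Fin 2`) with the single edge `V1 → V2`. -/
def exGraph2' : MGraph (Fin 2) where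
  dir a b := a = 0 ∧ b = 1
  bidir _ _ := False
  dir_irrefl := by decide
  bidir_irrefl := by decide
  bidir_symm := by decide

/-- The empty independence model over `Fin 2`. -/
def exI2 : Set (Set (Fin 2) × Set (Fin 2) × Set (Fin 2)) := ∅

namespace MGraph

variable {V : Type}

theorem Ancestor.le [PartialOrder V] {G : MGraph V} (hdir : ∀ a b, G.dir a b → a < b)
    {x y : V} (h : G.Ancestor x y) : x ≤ y := by
  induction h with
  | refl => exact le_rfl
  | tail _ hbc ih => exact ih.trans (hdir _ _ hbc).le

theorem acyclic_of_dir_lt [PartialOrder V] {G : MGraph V} (hdir : ∀ a b, G.dir a b → a < b) :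
    G.Acyclic :=
  fun _ _ hxy hyx => (hxy.le hdir).antisymm (hyx.le hdir)

theorem edgeKind_ne {G : MGraph V} {k : EKind} {a b : V} (h : G.edgeKind k a b) : a ≠ b := by
  rintro rfl
  cases k
  exacts [G.dir_irrefl a h, G.dir_irrefl a h, G.bidir_irrefl a h]

def Path.ofEdge {G : MGraph V} {k : EKind} {a b : V} (h : G.edgeKind k a b) : G.Path a b where
  verts := [a, b]
  kinds := [k]
  len_eq := rfl
  nodup := by simpa using edgeKind_ne h
  head_eq := rfl
  last_eq := rfl
  valid := by
    intro i hi
    obtain rfl : i = 0 := by simpa using hi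
    exact h

theorem Path.ofEdge_mConn {G : MGraph V} {k : EKind} {a b : V} (h : G.edgeKind k a b)
    (Z : Set V) : (Path.ofEdge h).MConn Z := by
  intro i hi hlt
  simp only [Path.ofEdge, List.length_cons, List.length_nil] at hlt
  omega

theorem exists_edgeKind_of_adj {G : MGraph V} {a b : V} (h : G.Adj a b) :
    ∃ k, G.edgeKind k a b := by
  rcases h with h | h | h
  exacts [⟨.fwd, h⟩, ⟨.bwd, h⟩, ⟨.bi, h⟩]

theorem not_mSep_of_adj {G : MGraph V} {a b : V} (h : G.Adj a b) (Z : Set V) :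
    ¬ G.MSep a b Z := by
  obtain ⟨k, hk⟩ := exists_edgeKind_of_adj h
  exact fun hsep => hsep.2.2.2.1 (Path.ofEdge hk) (Path.ofEdge_mConn hk Z)

end MGraph

theorem markov_empty_of_adj {V : Type} {G : MGraph V} (hadj : ∀ x y, x ≠ y → G.Adj x y) :
    Markov G ∅ := by
  rintro X Y Z ⟨a, ha⟩ ⟨b, hb⟩ hXY - - hsep
  exact G.not_mSep_of_adj (hadj a b (hXY.ne_of_mem ha hb)) Z (hsep a ha b hb)

theorem faithful_empty {V : Type} (G : MGraph V) : Faithful G ∅ :=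
  fun _ _ _ h => absurd h (Set.notMem_empty _)

theorem adj_fin_two_of_dir_zero_one {G : MGraph (Fin 2)} (h : G.dir 0 1) :
    ∀ x y : Fin 2, x ≠ y → G.Adj x y := by
  intro x y hxy
  fin_cases x <;> fin_cases y
  exacts [absurd rfl hxy, Or.inl h, Or.inr (Or.inl h), absurd rfl hxy]

theorem numEdges_exGraph2 : exGraph2.numEdges = 2 := by
  have hdir : {p : Fin 2 × Fin 2 | exGraph2.dir p.1 p.2} = {(0, 1)} := by
    ext ⟨a, b⟩
    simp [exGraph2]
  have hbidir : {e : Sym2 (Fin 2) | ∃ a b, e = s(a, b) ∧ exGraph2.bidir a b} = {s(0, 1)} := by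
    ext e
    induction e using Sym2.ind
    simp [exGraph2, or_comm]
  rw [MGraph.numEdges, hdir, hbidir, Set.ncard_singleton, Set.ncard_singleton]

theorem numEdges_exGraph2' : exGraph2'.numEdges = 1 := by
  have hdir : {p : Fin 2 × Fin 2 | exGraph2'.dir p.1 p.2} = {(0, 1)} := by
    ext ⟨a, b⟩
    simp [exGraph2']
  have hbidir : {e : Sym2 (Fin 2) | ∃ a b, e = s(a, b) ∧ exGraph2'.bidir a b} = ∅ := by
    simp [exGraph2']
  rw [MGraph.numEdges, hdir, hbidir, Set.ncard_singleton, Set.ncard_empty]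

/-- For SMCMs, Markov and Faithfulness do not entail NoE-minimality:
concretely, `exGraph2` (edges `V1 → V2` and `V1 ↔ V2`) satisfies Markov and
Faithfulness with the empty independence model, while `exGraph2'` (single edge
`V1 → V2`) is an SMCM with strictly fewer edges satisfying Markov with it; hence
`exGraph2` is not NoE-minimal. -/
theorem statement_19 :
    exGraph2.Acyclic ∧ Markov exGraph2 exI2 ∧ Faithful exGraph2 exI2 ∧
    exGraph2'.Acyclic ∧ exGraph2'.numEdges < exGraph2.numEdges ∧
    Markov exGraph2' exI2 ∧ ¬ NoEMinimalSMCM exGraph2 exI2 := by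
  have dir_lt : ∀ a b : Fin 2, a = 0 ∧ b = 1 → a < b := by
    rintro _ _ ⟨rfl, rfl⟩
    exact Fin.zero_lt_one
  have hacyc : exGraph2.Acyclic := MGraph.acyclic_of_dir_lt dir_lt
  have hacyc' : exGraph2'.Acyclic := MGraph.acyclic_of_dir_lt dir_lt
  have hmarkov : Markov exGraph2 exI2 :=
    markov_empty_of_adj (adj_fin_two_of_dir_zero_one ⟨rfl, rfl⟩)
  have hmarkov' : Markov exGraph2' exI2 :=
    markov_empty_of_adj (adj_fin_two_of_dir_zero_one ⟨rfl, rfl⟩)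
  have hfewer : exGraph2'.numEdges < exGraph2.numEdges := by
    rw [numEdges_exGraph2, numEdges_exGraph2']
    exact Nat.one_lt_two
  exact ⟨hacyc, hmarkov, faithful_empty _, hacyc', hfewer, hmarkov',
    fun hmin => hmin ⟨exGraph2', hacyc', hfewer, hmarkov'⟩⟩
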